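/- Let c ∈ (0, 1), b > 0, C₀ > 0 and M > 0. There exist T₀ > 0 and C₁ > 0, depending only on c, b, C₀ and M, with the following property: for every real T ≥ T₀, every integer J with T/2 − 1 ≤ J < T/2, and every function a : {0, 1, …, J} → [0, ∞) satisfying a(i) ≤ c · a(i + 1) + C₀ (T − i − 1)^{−2b} for all 0 ≤ i ≤ J − 1 and a(J) ≤ M T, one has a(0) ≤ C₁ T^{−2b}. -/
import Mathlib


open Real Filter

/-- the iteration lemma behind the algebraic convergence rates. -/
theorem iteration_lemma_algebraic_rate
    (c b C₀ M : ℝ) (hc0 : 0 < c) (hc1 : c < 1) (hb : 0 < b) (hC₀ : 0 < C₀) (hM : 0 < M) :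
    ∃ T₀ > (0:ℝ), ∃ C₁ > (0:ℝ), ∀ T : ℝ, T₀ ≤ T → ∀ J : ℕ,
      T / 2 - 1 ≤ (J : ℝ) → (J : ℝ) < T / 2 →
      ∀ a : ℕ → ℝ, (∀ i : ℕ, i ≤ J → 0 ≤ a i) →
      (∀ i : ℕ, i + 1 ≤ J → a i ≤ c * a (i + 1) + C₀ * (T - (i : ℝ) - 1) ^ (-(2 * b))) →
      a J ≤ M * T →
      a 0 ≤ C₁ * T ^ (-(2 * b)) := by
  have hlogc : Real.log c < 0 := Real.log_neg hc0 hc1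
  set β : ℝ := -Real.log c / 2 with hβdef
  have hβ : 0 < β := by rw [hβdef]; linarith
  -- find T₀' beyond which x^(1+2b) * exp(-β x) < c
  have htend := tendsto_rpow_mul_exp_neg_mul_atTop_nhds_zero (1 + 2 * b) β hβ
  have hev : ∀ᶠ x in atTop, x ^ (1 + 2 * b) * Real.exp (-β * x) < c :=
    htend.eventually_lt_const hc0
  obtain ⟨T₀', hT₀'⟩ := eventually_atTop.mp hev
  refine ⟨max T₀' 4, lt_of_lt_of_le four_pos (le_max_right _ _), M + C₀ * (2:ℝ) ^ (2 * b) / (1 - c), by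
      have h2 : (0:ℝ) < (2:ℝ) ^ (2 * b) := rpow_pos_of_pos two_pos _
      have h3 : (0:ℝ) < 1 - c := by linarith
      have := div_pos (mul_pos hC₀ h2) h3
      linarith, ?_⟩
  intro T hT J hJ1 hJ2 a ha hrec haJ
  have hT4 : (4:ℝ) ≤ T := le_trans (le_max_right _ _) hT
  have hTpos : (0:ℝ) < T := by linarith
  have hThalf : (0:ℝ) < T / 2 := by linarith
  have h1c : (0:ℝ) < 1 - c := by linarith
  have hTneg : 0 < T ^ (-(2 * b)) := rpow_pos_of_pos hTpos _
  set B : ℝ := C₀ * (2:ℝ) ^ (2 * b) * T ^ (-(2 * b)) with hBdef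
  have hBpos : 0 < B := by
    have h2 : (0:ℝ) < (2:ℝ) ^ (2 * b) := rpow_pos_of_pos two_pos _
    positivity
  -- each error term is bounded by B
  have herr : ∀ i : ℕ, i + 1 ≤ J → C₀ * (T - (i : ℝ) - 1) ^ (-(2 * b)) ≤ B := by
    intro i hi
    have hi' : (i : ℝ) + 1 ≤ (J : ℝ) := by exact_mod_cast hi
    have hge : T / 2 ≤ T - (i : ℝ) - 1 := by linarith
    have h1 : (T - (i : ℝ) - 1) ^ (-(2 * b)) ≤ (T / 2) ^ (-(2 * b)) :=
      rpow_le_rpow_of_nonpos hThalf hge (by linarith)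
    have h2 : (T / 2) ^ (-(2 * b)) = (2:ℝ) ^ (2 * b) * T ^ (-(2 * b)) := by
      rw [Real.div_rpow hTpos.le two_pos.le, Real.rpow_neg two_pos.le, div_eq_mul_inv, inv_inv]
      ring
    calc C₀ * (T - (i : ℝ) - 1) ^ (-(2 * b)) ≤ C₀ * ((2:ℝ) ^ (2 * b) * T ^ (-(2 * b))) := by
          rw [← h2]; exact mul_le_mul_of_nonneg_left h1 hC₀.le
      _ = B := by rw [hBdef]; ring
  -- iteration
  have hiter : ∀ n : ℕ, n ≤ J →
      a 0 ≤ c ^ n * a n + B * ∑ i ∈ Finset.range n, c ^ i := by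
    intro n
    induction n with
    | zero => intro _; simp
    | succ n ih =>
      intro hn
      have hIH := ih (le_trans (Nat.le_succ n) hn)
      have hrn := hrec n hn
      have hB := herr n hn
      have hcn : (0:ℝ) ≤ c ^ n := pow_nonneg hc0.le n
      calc a 0 ≤ c ^ n * a n + B * ∑ i ∈ Finset.range n, c ^ i := hIH
        _ ≤ c ^ n * (c * a (n + 1) + B) + B * ∑ i ∈ Finset.range n, c ^ i := by
            have : a n ≤ c * a (n + 1) + B := le_trans hrn (by linarith)
            nlinarith [mul_le_mul_of_nonneg_left this hcn]
        _ = c ^ (n + 1) * a (n + 1) + B * ∑ i ∈ Finset.range (n + 1), c ^ i := by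
            rw [Finset.sum_range_succ]; ring
  have hmain := hiter J le_rfl
  -- geometric sum bound
  have hgeom : ∑ i ∈ Finset.range J, c ^ i ≤ 1 / (1 - c) := by
    rw [geom_sum_eq (ne_of_lt hc1) J]
    have hcJ : (0:ℝ) ≤ c ^ J := pow_nonneg hc0.le J
    have heq : (c ^ J - 1) / (c - 1) = (1 - c ^ J) / (1 - c) := by
      rw [div_eq_div_iff (by linarith) (by linarith)]; ring
    rw [heq]
    gcongr
    linarith
  -- bound c^J * a J
  have hcJT : c ^ J * a J ≤ M * T ^ (-(2 * b)) := by
    have hcJpos : (0:ℝ) ≤ c ^ J := pow_nonneg hc0.le J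
    have h1 : c ^ J * a J ≤ c ^ J * (M * T) := by
      exact mul_le_mul_of_nonneg_left haJ hcJpos
    have h2 : c ^ J ≤ c ^ (T / 2 - 1 : ℝ) := by
      rw [← Real.rpow_natCast c J]
      exact Real.rpow_le_rpow_of_exponent_ge hc0 hc1.le hJ1
    have h3 : c ^ (T / 2 - 1 : ℝ) * T ^ (1 + 2 * b) < 1 := by
      have hlt := hT₀' T (le_trans (le_max_left _ _) hT)
      have hrw : c ^ (T / 2 - 1 : ℝ) = Real.exp (-β * T) / c := by
        rw [Real.rpow_def_of_pos hc0]
        rw [eq_div_iff (ne_of_gt hc0)]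
        have hc' : Real.exp (Real.log c * (T / 2 - 1)) * c
            = Real.exp (Real.log c * (T / 2 - 1)) * Real.exp (Real.log c) := by
          rw [Real.exp_log hc0]
        rw [hc', ← Real.exp_add]
        congr 1
        rw [hβdef]; ring
      rw [hrw]
      rw [div_mul_eq_mul_div, div_lt_one hc0]
      calc Real.exp (-β * T) * T ^ (1 + 2 * b)
          = T ^ (1 + 2 * b) * Real.exp (-β * T) := by ring
        _ < c := hlt
    have h4 : c ^ (T / 2 - 1 : ℝ) * T ≤ T ^ (-(2 * b)) := by
      have hTe : (0:ℝ) < T ^ (1 + 2 * b) := rpow_pos_of_pos hTpos _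
      have h5 : c ^ (T / 2 - 1 : ℝ) ≤ T ^ (-(1 + 2 * b)) := by
        rw [Real.rpow_neg hTpos.le, inv_eq_one_div, le_div_iff₀ hTe]
        exact h3.le
      have h6 : T ^ (-(1 + 2 * b)) * T = T ^ (-(2 * b)) := by
        rw [show -(1 + 2 * b) = -(2 * b) + (-1) by ring, Real.rpow_add hTpos,
          Real.rpow_neg_one]
        field_simp
      calc c ^ (T / 2 - 1 : ℝ) * T ≤ T ^ (-(1 + 2 * b)) * T :=
            mul_le_mul_of_nonneg_right h5 hTpos.le
        _ = T ^ (-(2 * b)) := h6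
    calc c ^ J * a J ≤ c ^ J * (M * T) := h1
      _ ≤ c ^ (T / 2 - 1 : ℝ) * (M * T) := by
          exact mul_le_mul_of_nonneg_right h2 (by positivity)
      _ = M * (c ^ (T / 2 - 1 : ℝ) * T) := by ring
      _ ≤ M * T ^ (-(2 * b)) := mul_le_mul_of_nonneg_left h4 hM.le
  calc a 0 ≤ c ^ J * a J + B * ∑ i ∈ Finset.range J, c ^ i := hmain
    _ ≤ M * T ^ (-(2 * b)) + B * (1 / (1 - c)) := by
        exact add_le_add hcJT (mul_le_mul_of_nonneg_left hgeom hBpos.le)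
    _ = (M + C₀ * (2:ℝ) ^ (2 * b) / (1 - c)) * T ^ (-(2 * b)) := by
        rw [hBdef]; field_simp
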